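/- If ε > 0 and k = k(n) > (4/3 + ε)·log₂(n), then (2k)!·binomial(n, 2k)·2^{-3k(k-1)/2} → 0 as n → ∞; hence G(n, 1/2) asymptotically almost surely contains no subgraph isomorphic to X_k. -/

import Mathlib

open MeasureTheory Filter

/-- The Erdős–Rényi random graph measure: each potential edge of `K_n` (indexed by
`Sym2 (Fin n)`; diagonal coordinates are irrelevant) is present independently with
probability `p`. -/
noncomputable def erMeasure (n : ℕ) (p : ℝ) (h1 : p ≤ 1) :
    Measure (Sym2 (Fin n) → Bool) :=
  Measure.pi fun _ =>
    (PMF.bernoulli (Real.toNNReal p) (Real.toNNReal_le_one.mpr h1)).toMeasure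

/-- The graph determined by a sample `ω`. -/
def graphOf {n : ℕ} (ω : Sym2 (Fin n) → Bool) : SimpleGraph (Fin n) :=
  SimpleGraph.fromEdgeSet {e | ω e = true}

/-- The graph `X_k` on vertex set `{u_1,...,u_k} ⊔ {v_1,...,v_k}`: the `u_i` span a clique,
the `v_j` form an independent set, and `u_i ~ v_j` iff `i ≠ j`. -/
def Xgraph (k : ℕ) : SimpleGraph (Fin k ⊕ Fin k) :=
  SimpleGraph.fromRel fun a b =>
    match a, b with
    | Sum.inl _, Sum.inl _ => True
    | Sum.inl i, Sum.inr j => i ≠ j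
    | _, _ => False

/-!
The union bound over injective maps `Fin k ⊕ Fin k ↪ Fin n` bounds the probability of a copy
of `X_k` by its expected number of copies, `n.descFactorial (2k) * 2^{-e(X_k)}`, where the
handshake lemma gives `e(X_k) = (2k(k-1) + k(k-1)) / 2`. With `L = log₂ n`, this is at most
`2^{2kL - 3k(k-1)/2}`, and `k > (4/3 + ε) L` makes the exponent at most `-L` as soon as `εL ≥ 3`.
-/

open Finset SimpleGraph

namespace Xgraph

variable {k : ℕ}

@[simp] theorem adj_inl_inl (i j : Fin k) : (Xgraph k).Adj (.inl i) (.inl j) ↔ i ≠ j := by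
  simp [Xgraph]

@[simp] theorem adj_inl_inr (i j : Fin k) : (Xgraph k).Adj (.inl i) (.inr j) ↔ i ≠ j := by
  simp [Xgraph]

@[simp] theorem adj_inr_inl (i j : Fin k) : (Xgraph k).Adj (.inr i) (.inl j) ↔ i ≠ j := by
  simp [Xgraph, eq_comm]

@[simp] theorem not_adj_inr_inr (i j : Fin k) : ¬(Xgraph k).Adj (.inr i) (.inr j) := by
  simp [Xgraph]

variable [DecidableRel (Xgraph k).Adj]

theorem degree_inl (i : Fin k) : (Xgraph k).degree (.inl i) = 2 * (k - 1) := by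
  have : (Xgraph k).neighborFinset (.inl i) = (univ.erase i).disjSum (univ.erase i) := by
    ext (j | j) <;> simp [ne_comm]
  rw [← card_neighborFinset_eq_degree, this, card_disjSum, card_erase_of_mem (mem_univ i),
    card_univ, Fintype.card_fin, two_mul]

theorem degree_inr (j : Fin k) : (Xgraph k).degree (.inr j) = k - 1 := by
  have : (Xgraph k).neighborFinset (.inr j) = (univ.erase j).disjSum ∅ := by
    ext (i | i) <;> simp [ne_comm]
  rw [← card_neighborFinset_eq_degree, this, card_disjSum, card_erase_of_mem (mem_univ j),
    card_univ, Fintype.card_fin, card_empty, add_zero]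

theorem card_edgeFinset : #(Xgraph k).edgeFinset = 3 * k * (k - 1) / 2 := by
  have h := (Xgraph k).sum_degrees_eq_twice_card_edges
  simp only [Fintype.sum_sum_type, degree_inl, degree_inr, sum_const, card_univ,
    Fintype.card_fin, smul_eq_mul] at h
  rw [show 3 * k * (k - 1) = 2 * #(Xgraph k).edgeFinset by rw [← h]; ring,
    Nat.mul_div_cancel_left _ two_pos]

end Xgraph

section RandomGraph

variable {n : ℕ} {p : ℝ} (hp : p ≤ 1)

theorem erMeasure_setOf_le_graphOf (G : SimpleGraph (Fin n)) [Fintype G.edgeSet] :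
    erMeasure n p hp {ω | G ≤ graphOf ω} = ENNReal.ofReal p ^ #G.edgeFinset := by
  have hset : {ω | G ≤ graphOf ω} = (G.edgeFinset : Set (Sym2 (Fin n))).pi fun _ => {true} := by
    ext ω
    simp only [graphOf, le_fromEdgeSet_iff, coe_edgeFinset]
    rfl
  rw [erMeasure, hset, Measure.pi_pi_finset, prod_const,
    PMF.toMeasure_apply_singleton _ _ (measurableSet_singleton _)]
  rfl

theorem erMeasure_exists_injective_hom_le {V : Type*} [Fintype V] [DecidableEq V]
    (H : SimpleGraph V) [DecidableRel H.Adj] :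
    erMeasure n p hp {ω | ∃ f : H →g graphOf ω, Function.Injective f}
      ≤ n.descFactorial (Fintype.card V) * ENNReal.ofReal p ^ #H.edgeFinset := by
  have hsub : {ω | ∃ f : H →g graphOf ω, Function.Injective f}
      ⊆ ⋃ g : V ↪ Fin n, {ω | H.map g ≤ graphOf ω} := by
    rintro ω ⟨f, hf⟩
    exact Set.mem_iUnion.mpr ⟨⟨f, hf⟩, (map_le_iff_le_comap _ _ _).mpr fun _ _ => f.map_adj⟩
  calc _ ≤ _ := measure_mono hsub
    _ ≤ ∑ g : V ↪ Fin n, erMeasure n p hp {ω | H.map g ≤ graphOf ω} :=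
      measure_iUnion_fintype_le _ _
    _ = _ := by
      simp only [erMeasure_setOf_le_graphOf, card_edgeFinset_map, sum_const, card_univ,
        Fintype.card_embedding_eq, Fintype.card_fin, nsmul_eq_mul]

end RandomGraph

theorem erMeasure_exists_Xgraph_copy_le (n k : ℕ) :
    erMeasure n (1/2) (by norm_num) {ω | ∃ f : Xgraph k →g graphOf ω, Function.Injective f}
      ≤ ENNReal.ofReal (((2 * k).factorial : ℝ) * n.choose (2 * k) *
          (1/2 : ℝ) ^ (3 * k * (k - 1) / 2)) := by
  classical
  refine (erMeasure_exists_injective_hom_le _ (Xgraph k)).trans_eq ?_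
  rw [Xgraph.card_edgeFinset, Fintype.card_sum, Fintype.card_fin, ← two_mul,
    Nat.descFactorial_eq_factorial_mul_choose, ENNReal.ofReal_mul (by positivity),
    ENNReal.ofReal_pow (by norm_num), ← Nat.cast_mul, ENNReal.ofReal_natCast]

theorem pow_mul_half_pow_le_inv {ε : ℝ} {n K : ℕ} (hK : (4/3 + ε) * Real.logb 2 n < K)
    (hεL : 3 ≤ ε * Real.logb 2 n) :
    (n : ℝ) ^ (2 * K) * (1/2 : ℝ) ^ (3 * K * (K - 1) / 2) ≤ 1 / n := by
  set L := Real.logb 2 n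
  set m := 3 * K * (K - 1) / 2
  have hn : (0 : ℝ) < n := by
    rcases n.eq_zero_or_pos with rfl | hn
    · simp [L] at hεL; linarith
    · exact_mod_cast hn
  have hL : 0 ≤ L := Real.logb_nonneg one_lt_two (by exact_mod_cast hn)
  have hK1 : 1 ≤ K := by
    by_contra! h
    simp only [Nat.lt_one_iff.mp h, CharP.cast_eq_zero] at hK
    nlinarith
  have hm : 3 * (K : ℝ) * (K - 1) ≤ 2 * m + 1 := by
    have h : 3 * K * (K - 1) ≤ 2 * m + 1 := by omega
    have h := (Nat.cast_le (α := ℝ)).mpr h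
    push_cast [Nat.cast_sub hK1] at h
    exact h
  -- `n = 2 ^ L`, so it suffices to compare exponents: `(2K + 1) L ≤ m`.
  have hexp : ((2 * K + 1 : ℕ) : ℝ) * L ≤ m := by
    push_cast
    nlinarith [mul_le_mul_of_nonneg_left hK.le (Nat.cast_nonneg K)]
  have hpow : (n : ℝ) ^ (2 * K + 1) ≤ 2 ^ m := by
    rw [← Real.rpow_logb two_pos (by norm_num) hn, ← Real.rpow_natCast, ← Real.rpow_mul two_pos.le,
      ← Real.rpow_natCast 2 m, mul_comm]
    exact Real.rpow_le_rpow_of_exponent_le one_le_two hexp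
  rw [one_div_pow, ← div_eq_mul_one_div, div_le_div_iff₀ (by positivity) hn, one_mul, ← pow_succ]
  exact hpow

/-- If `ε > 0` and `k = k(n) > (4/3 + ε) log₂ n`, then
`(2k)! * choose n (2k) * 2^{-3k(k-1)/2} → 0`; hence `G(n, 1/2)` asymptotically almost
surely contains no subgraph isomorphic to `X_k`. -/
theorem aas_no_Xk_subgraph (ε : ℝ) (hε : 0 < ε) (k : ℕ → ℕ)
    (hk : ∀ n : ℕ, (4/3 + ε) * Real.logb 2 n < k n) :
    Tendsto (fun n : ℕ => ((2 * k n).factorial : ℝ) * (n.choose (2 * k n)) *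
        (1/2 : ℝ) ^ (3 * k n * (k n - 1) / 2)) atTop (nhds 0) ∧
    Tendsto (fun n : ℕ => erMeasure n (1/2) (by norm_num)
        {ω | ∃ f : Xgraph (k n) →g graphOf ω, Function.Injective f})
      atTop (nhds 0) := by
  have hεL : ∀ᶠ n : ℕ in atTop, 3 ≤ ε * Real.logb 2 n :=
    ((Real.tendsto_logb_atTop one_lt_two).comp tendsto_natCast_atTop_atTop).const_mul_atTop hε
      |>.eventually_ge_atTop 3
  have hmean : Tendsto (fun n : ℕ => ((2 * k n).factorial : ℝ) * (n.choose (2 * k n)) *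
      (1/2 : ℝ) ^ (3 * k n * (k n - 1) / 2)) atTop (nhds 0) := by
    refine tendsto_of_tendsto_of_tendsto_of_le_of_le' tendsto_const_nhds
      tendsto_one_div_atTop_nhds_zero_nat (.of_forall fun n => by positivity) ?_
    filter_upwards [hεL] with n hn
    rw [← Nat.cast_mul, ← Nat.descFactorial_eq_factorial_mul_choose]
    refine le_trans ?_ (pow_mul_half_pow_le_inv (hk n) hn)
    gcongr
    exact_mod_cast n.descFactorial_le_pow _
  refine ⟨hmean, ?_⟩
  have h := ENNReal.tendsto_ofReal hmean
  rw [ENNReal.ofReal_zero] at h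
  exact tendsto_of_tendsto_of_tendsto_of_le_of_le tendsto_const_nhds h (fun _ => zero_le)
    fun n => erMeasure_exists_Xgraph_copy_le n (k n)
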